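/- arXiv:1601.00465 — 6 statements merged into one kernel-verified Lean document; each statement's English description precedes it below -/
import Mathlib

section
/- Let m ≥ 1, let U ⊆ ℝ^m be open, let S : U → (m×m real matrices) be continuously differentiable with S(x)ᵀ = −S(x) for every x ∈ U, and let Y, Z : U → ℝ^m be continuously differentiable vector fields. Define the 2-form σ_x(u,v) := ⟨u, S(x)v⟩. Assume: (a) Y is Hamiltonian, i.e. there exists a differentiable f : U → ℝ with S(x)·Y(x) = ∇f(x) for all x ∈ U (equivalently, the 1-form i_Yσ : v ↦ σ_x(Y(x),v) equals −df); (b) Z is a symmetry of σ, i.e. for all x ∈ U and all u, v ∈ ℝ^m: ⟨u, (DS(x)[Z(x)])v⟩ + ⟨DZ(x)u, S(x)v⟩ + ⟨u, S(x)(DZ(x)v)⟩ = 0, where DS(x)[Z(x)] is the directional derivative of S at x along Z(x) and DZ(x) is the Jacobian matrix of Z at x. Define g(x) := ⟨Y(x), S(x)Z(x)⟩ (= σ_x(Y(x),Z(x))) and the Lie bracket [Y,Z](x) := DZ(x)·Y(x) − DY(x)·Z(x). Then g is differentiable and S(x)·[Y,Z](x) = ∇g(x) for every x ∈ U; in particular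 [Y,Z] is a Hamiltonian vector field for σ with Hamiltonian function σ(Y,Z). -/
/-!
Differentiate `g = σ(Y, Z)` in a direction `u`. Since `S·Y` is a gradient, its Jacobian is
symmetric (Schwarz), which exchanges `u` and `Z` in the terms carrying `DY`; the invariance of `σ`
under `Z`, evaluated on `(u, Y)`, turns the terms carrying `DS[Z]` and `DZ` into `σ(u, DZ·Y)`.
Skew-symmetry of `S` and of `DS[u]` matches up the remaining terms.
-/

open Matrix Topology

section Calculus

variable {ι : Type*} [Fintype ι] {E : Type*} [NormedAddCommGroup E] [NormedSpace ℝ E]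

variable (ι) in
noncomputable def dotProductCLM : (ι → ℝ) →L[ℝ] (ι → ℝ) →L[ℝ] ℝ :=
  ∑ i, (ContinuousLinearMap.proj i).smulRight (ContinuousLinearMap.proj i)

@[simp]
theorem dotProductCLM_apply (a b : ι → ℝ) : dotProductCLM ι a b = a ⬝ᵥ b := by
  simp [dotProductCLM, dotProduct]

theorem HasFDerivAt.dotProduct {a b : E → ι → ℝ} {a' b' : E →L[ℝ] ι → ℝ} {x : E}
    (ha : HasFDerivAt a a' x) (hb : HasFDerivAt b b' x) :
    HasFDerivAt (fun y => a y ⬝ᵥ b y)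
      ((dotProductCLM ι (a x)).comp b' + ((dotProductCLM ι).comp a').flip (b x)) x := by
  simpa only [Function.comp_apply, dotProductCLM_apply] using
    ((dotProductCLM ι).hasFDerivAt.comp x ha).clm_apply hb

variable {a b : E → ι → ℝ} {x : E}

theorem DifferentiableAt.dotProduct (ha : DifferentiableAt ℝ a x)
    (hb : DifferentiableAt ℝ b x) : DifferentiableAt ℝ (fun y => a y ⬝ᵥ b y) x :=
  (ha.hasFDerivAt.dotProduct hb.hasFDerivAt).differentiableAt

theorem fderiv_dotProduct (ha : DifferentiableAt ℝ a x) (hb : DifferentiableAt ℝ b x) (u : E) :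
    fderiv ℝ (fun y => a y ⬝ᵥ b y) x u = fderiv ℝ a x u ⬝ᵥ b x + a x ⬝ᵥ fderiv ℝ b x u := by
  rw [(ha.hasFDerivAt.dotProduct hb.hasFDerivAt).fderiv]
  simp [add_comm, dotProduct_comm]

variable {κ : Type*}

noncomputable def entrywiseFDeriv (S : E → Matrix κ ι ℝ) (x w : E) : Matrix κ ι ℝ :=
  of fun i j => fderiv ℝ (fun y => S y i j) x w

variable {S : E → Matrix κ ι ℝ} {c : E → ι → ℝ}

theorem DifferentiableAt.mulVec (hS : ∀ i j, DifferentiableAt ℝ (fun y => S y i j) x)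
    (hc : DifferentiableAt ℝ c x) : DifferentiableAt ℝ (fun y => S y *ᵥ c y) x :=
  differentiableAt_pi.2 fun i => (differentiableAt_pi.2 (hS i)).dotProduct hc

theorem fderiv_mulVec (hS : ∀ i j, DifferentiableAt ℝ (fun y => S y i j) x)
    (hc : DifferentiableAt ℝ c x) (w : E) :
    fderiv ℝ (fun y => S y *ᵥ c y) x w =
      entrywiseFDeriv S x w *ᵥ c x + S x *ᵥ fderiv ℝ c x w := by
  have hrow : ∀ i, DifferentiableAt ℝ (fun y => S y i) x :=
    fun i => differentiableAt_pi.2 (hS i)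
  ext i
  change fderiv ℝ (fun y i => S y i ⬝ᵥ c y) x w i = _
  rw [fderiv_pi (fun i => (hrow i).dotProduct hc), ContinuousLinearMap.pi_apply,
    fderiv_dotProduct (hrow i) hc, fderiv_pi (hS i)]
  rfl

theorem transpose_entrywiseFDeriv_eq_neg {S : E → Matrix κ κ ℝ} {U : Set E} (hU : U ∈ 𝓝 x)
    (hskew : ∀ y ∈ U, (S y)ᵀ = -S y) (w : E) :
    (entrywiseFDeriv S x w)ᵀ = -entrywiseFDeriv S x w := by
  ext i j
  have hji : (fun y => S y j i) =ᶠ[𝓝 x] fun y => -S y i j := by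
    filter_upwards [hU] with y hy
    simpa using congrFun (congrFun (hskew y hy) i) j
  simp [entrywiseFDeriv, hji.fderiv_eq, fderiv_fun_neg]

end Calculus

theorem dotProduct_mulVec_eq_neg_of_transpose_eq_neg {ι : Type*} [Fintype ι]
    {A : Matrix ι ι ℝ} (hA : Aᵀ = -A) (u v : ι → ℝ) : u ⬝ᵥ A *ᵥ v = -(v ⬝ᵥ A *ᵥ u) := by
  rw [dotProduct_mulVec, dotProduct_comm, ← mulVec_transpose, hA, neg_mulVec, dotProduct_neg]

theorem dotProduct_mulVec_sub_eq_of_skew {ι : Type*} [Fintype ι] {A Au Az : Matrix ι ι ℝ}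
    (hA : Aᵀ = -A) (hAu : Auᵀ = -Au) {u y z Yu Yz Zu Zy : ι → ℝ}
    (hHessian : z ⬝ᵥ (Au *ᵥ y + A *ᵥ Yu) = u ⬝ᵥ (Az *ᵥ y + A *ᵥ Yz))
    (hinv : u ⬝ᵥ Az *ᵥ y + Zu ⬝ᵥ A *ᵥ y + u ⬝ᵥ A *ᵥ Zy = 0) :
    u ⬝ᵥ A *ᵥ (Zy - Yz) = Yu ⬝ᵥ A *ᵥ z + y ⬝ᵥ (Au *ᵥ z + A *ᵥ Zu) := by
  have hskewA := dotProduct_mulVec_eq_neg_of_transpose_eq_neg hA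
  have hskewAu := dotProduct_mulVec_eq_neg_of_transpose_eq_neg hAu
  simp only [dotProduct_add, mulVec_sub, dotProduct_sub] at hHessian ⊢
  linear_combination hHessian + hinv - hskewAu z y - hskewA z Yu - hskewA Zu y

section Gradient

variable {ι : Type*} [Fintype ι] [DecidableEq ι]

theorem eq_dotProductCLM_single (L : (ι → ℝ) →L[ℝ] ℝ) :
    L = dotProductCLM ι fun i => L (Pi.single i 1) := by
  refine ContinuousLinearMap.coe_injective (LinearMap.pi_ext fun i t => ?_)
  rw [← mul_one t, ← smul_eq_mul, Pi.single_smul', map_smul]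
  simp [mul_comm]

theorem dotProduct_fderiv_comm_of_eq_gradient {f : (ι → ℝ) → ℝ} {h : (ι → ℝ) → ι → ℝ}
    {x : ι → ℝ} (hf : ∀ᶠ y in 𝓝 x, DifferentiableAt ℝ f y)
    (hgrad : ∀ᶠ y in 𝓝 x, h y = fun i => fderiv ℝ f y (Pi.single i 1))
    (hh : DifferentiableAt ℝ h x) (v w : ι → ℝ) :
    w ⬝ᵥ fderiv ℝ h x v = v ⬝ᵥ fderiv ℝ h x w := by
  have hf' : ∀ᶠ y in 𝓝 x, HasFDerivAt f (dotProductCLM ι (h y)) y := by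
    filter_upwards [hf, hgrad] with y hfy hy
    rw [hy, ← eq_dotProductCLM_single]
    exact hfy.hasFDerivAt
  simpa [dotProduct_comm] using second_derivative_symmetric_of_eventually hf'
    ((dotProductCLM ι).hasFDerivAt.comp x hh.hasFDerivAt) v w

end Gradient

theorem statement1_general (m : ℕ) (U : Set (Fin m → ℝ)) (hU : IsOpen U)
    (S : (Fin m → ℝ) → Matrix (Fin m) (Fin m) ℝ)
    (hS : ∀ i j : Fin m, ContDiffOn ℝ 1 (fun x => S x i j) U)
    (hskew : ∀ x ∈ U, (S x)ᵀ = -(S x))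
    (Y Z : (Fin m → ℝ) → (Fin m → ℝ))
    (hY : ContDiffOn ℝ 1 Y U) (hZ : ContDiffOn ℝ 1 Z U)
    -- (a) `Y` is Hamiltonian with Hamiltonian `f`: `S(x)·Y(x) = ∇f(x)` on `U`
    (f : (Fin m → ℝ) → ℝ) (hf : DifferentiableOn ℝ f U)
    (hHam : ∀ x ∈ U, (S x).mulVec (Y x) = fun i => fderiv ℝ f x (Pi.single i 1))
    -- (b) `Z` is a symmetry of `σ`:
    (hsym : ∀ x ∈ U, ∀ u v : Fin m → ℝ,
      u ⬝ᵥ (Matrix.of fun i j => fderiv ℝ (fun y => S y i j) x (Z x)).mulVec v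
        + (fderiv ℝ Z x u) ⬝ᵥ (S x).mulVec v
        + u ⬝ᵥ (S x).mulVec (fderiv ℝ Z x v) = 0) :
    DifferentiableOn ℝ (fun x => Y x ⬝ᵥ (S x).mulVec (Z x)) U ∧
    ∀ x ∈ U,
      (S x).mulVec (fderiv ℝ Z x (Y x) - fderiv ℝ Y x (Z x)) =
        fun i => fderiv ℝ (fun x => Y x ⬝ᵥ (S x).mulVec (Z x)) x (Pi.single i 1) := by
  have hSx : ∀ x ∈ U, ∀ i j, DifferentiableAt ℝ (fun y => S y i j) x := fun x hx i j =>
    ((hS i j).differentiableOn one_ne_zero).differentiableAt (hU.mem_nhds hx)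
  have hYx : ∀ x ∈ U, DifferentiableAt ℝ Y x := fun x hx =>
    (hY.differentiableOn one_ne_zero).differentiableAt (hU.mem_nhds hx)
  have hZx : ∀ x ∈ U, DifferentiableAt ℝ Z x := fun x hx =>
    (hZ.differentiableOn one_ne_zero).differentiableAt (hU.mem_nhds hx)
  refine ⟨fun x hx => ((hYx x hx).dotProduct
    (DifferentiableAt.mulVec (hSx x hx) (hZx x hx))).differentiableWithinAt, fun x hx => ?_⟩
  have hHessian := dotProduct_fderiv_comm_of_eq_gradient
    (Filter.eventually_of_mem (hU.mem_nhds hx) fun y hy => hf.differentiableAt (hU.mem_nhds hy))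
    (Filter.eventually_of_mem (hU.mem_nhds hx) hHam)
    (DifferentiableAt.mulVec (hSx x hx) (hYx x hx))
  simp only [fderiv_mulVec (hSx x hx) (hYx x hx)] at hHessian
  ext i
  refine (single_one_dotProduct i _).symm.trans ?_
  rw [fderiv_dotProduct (hYx x hx) (DifferentiableAt.mulVec (hSx x hx) (hZx x hx)),
    fderiv_mulVec (hSx x hx) (hZx x hx)]
  refine dotProduct_mulVec_sub_eq_of_skew (hskew x hx)
    (transpose_entrywiseFDeriv_eq_neg (hU.mem_nhds hx) hskew _) ?_ (hsym x hx _ (Y x))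
  exact hHessian (Pi.single i 1) (Z x)

/-- coordinate form of the paper's Lemma 1.  On an open set `U ⊆ ℝ^m`, let
`S` be a `C¹` field of skew-symmetric matrices representing the 2-form
`σ_x(u,v) = ⟨u, S(x)v⟩`, and let `Y, Z` be `C¹` vector fields.  If `Y` is Hamiltonian with
Hamiltonian `f` (i.e. `S·Y = ∇f` on `U`) and `Z` is a symmetry of `σ` (i.e. `L_Z σ = 0` in
coordinates), then `g(x) := ⟨Y(x), S(x)Z(x)⟩` is differentiable on `U` and
`S·[Y,Z] = ∇g` on `U`, where `[Y,Z] = DZ·Y − DY·Z`. -/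
theorem statement1 (m : ℕ) (hm : 1 ≤ m) (U : Set (Fin m → ℝ)) (hU : IsOpen U)
    (S : (Fin m → ℝ) → Matrix (Fin m) (Fin m) ℝ)
    (hS : ∀ i j : Fin m, ContDiffOn ℝ 1 (fun x => S x i j) U)
    (hskew : ∀ x ∈ U, (S x)ᵀ = -(S x))
    (Y Z : (Fin m → ℝ) → (Fin m → ℝ))
    (hY : ContDiffOn ℝ 1 Y U) (hZ : ContDiffOn ℝ 1 Z U)
    -- (a) `Y` is Hamiltonian with Hamiltonian `f`: `S(x)·Y(x) = ∇f(x)` on `U`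
    (f : (Fin m → ℝ) → ℝ) (hf : DifferentiableOn ℝ f U)
    (hHam : ∀ x ∈ U, (S x).mulVec (Y x) = fun i => fderiv ℝ f x (Pi.single i 1))
    -- (b) `Z` is a symmetry of `σ`:
    (hsym : ∀ x ∈ U, ∀ u v : Fin m → ℝ,
      u ⬝ᵥ (Matrix.of fun i j => fderiv ℝ (fun y => S y i j) x (Z x)).mulVec v
        + (fderiv ℝ Z x u) ⬝ᵥ (S x).mulVec v
        + u ⬝ᵥ (S x).mulVec (fderiv ℝ Z x v) = 0) :
    DifferentiableOn ℝ (fun x => Y x ⬝ᵥ (S x).mulVec (Z x)) U ∧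
    ∀ x ∈ U,
      (S x).mulVec (fderiv ℝ Z x (Y x) - fderiv ℝ Y x (Z x)) =
        fun i => fderiv ℝ (fun x => Y x ⬝ᵥ (S x).mulVec (Z x)) x (Pi.single i 1) :=
  statement1_general m U hU S hS hskew Y Z hY hZ f hf hHam hsym
end

section
/- Let V be a finite-dimensional real vector space and η : V × V × V → ℝ a nonzero alternating trilinear form. Then the kernel of η, namely the subspace ker η = {v ∈ V : η(v,w,x) = 0 for all w,x ∈ V}, has codimension at least 3 in V, i.e. dim V − dim(ker η) ≥ 3. -/
/-- Linear map `v ↦ η ![v, w, x]`. -/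
private def firstSlot {V : Type*} [AddCommGroup V] [Module ℝ V]
    (η : V [⋀^Fin 3]→ₗ[ℝ] ℝ) (w x : V) : V →ₗ[ℝ] ℝ where
  toFun v := η ![v, w, x]
  map_add' u v := η.toMultilinearMap.cons_add ![w, x] u v
  map_smul' r v := η.toMultilinearMap.cons_smul ![w, x] r v

/-- Let `V` be a finite-dimensional real vector space and `η` a nonzero
alternating trilinear form on `V`.  Then the kernel of `η`, i.e. the subspace
`{v | ∀ w x, η ![v, w, x] = 0}`, has codimension at least `3` in `V`. -/
theorem statement2 (V : Type*) [AddCommGroup V] [Module ℝ V] [FiniteDimensional ℝ V]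
    (η : V [⋀^Fin 3]→ₗ[ℝ] ℝ) (hη : η ≠ 0)
    (K : Submodule ℝ V) (hK : ∀ v : V, v ∈ K ↔ ∀ w x : V, η ![v, w, x] = 0) :
    3 ≤ Module.finrank ℝ V - Module.finrank ℝ K := by
  obtain ⟨a, b, c, habc⟩ : ∃ a b c : V, η ![a, b, c] ≠ 0 := by
    by_contra h
    push_neg at h
    apply hη
    ext v
    have hv : v = ![v 0, v 1, v 2] := by
      funext i; fin_cases i <;> rfl
    rw [hv]
    exact h _ _ _
  -- swap facts
  have hswap01 : ∀ u v w : V, η ![v, u, w] = - η ![u, v, w] := by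
    intro u v w
    have := η.map_swap ![u, v, w] (show (0 : Fin 3) ≠ 1 by decide)
    have harr : (![u, v, w] ∘ Equiv.swap (0 : Fin 3) 1) = ![v, u, w] := by
      funext i; fin_cases i <;> simp [Equiv.swap_apply_of_ne_of_ne]
    rwa [harr] at this
  have hswap12 : ∀ u v w : V, η ![u, w, v] = - η ![u, v, w] := by
    intro u v w
    have := η.map_swap ![u, v, w] (show (1 : Fin 3) ≠ 2 by decide)
    have harr : (![u, v, w] ∘ Equiv.swap (1 : Fin 3) 2) = ![u, w, v] := by
      funext i; fin_cases i <;> simp [Equiv.swap_apply_of_ne_of_ne]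
    rwa [harr] at this
  have hzero01 : ∀ u w : V, η ![u, u, w] = 0 := by
    intro u w
    exact η.map_eq_zero_of_eq ![u, u, w] (by simp) (show (0 : Fin 3) ≠ 1 by decide)
  have hzero02 : ∀ u w : V, η ![u, w, u] = 0 := by
    intro u w
    exact η.map_eq_zero_of_eq ![u, w, u] (i := 0) (j := 2) (by simp) (by decide)
  have hli : LinearIndependent ℝ (fun i => K.mkQ (![a, b, c] i)) := by
    rw [Fintype.linearIndependent_iff]
    intro g hg
    have hmem : (∑ i, g i • ![a, b, c] i) ∈ K := by
      rw [← Submodule.Quotient.mk_eq_zero]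
      have : K.mkQ (∑ i, g i • ![a, b, c] i) = 0 := by
        rw [map_sum]; simp only [map_smul]; exact hg
      exact this
    have hexp : ∀ w x : V, ∑ i, g i • η ![(![a, b, c]) i, w, x] = 0 := by
      intro w x
      have h0 := (hK _).mp hmem w x
      have h1 : (firstSlot η w x) (∑ i, g i • ![a, b, c] i) = 0 := h0
      rw [map_sum] at h1
      simp only [map_smul] at h1
      exact h1
    have h0 : g 0 = 0 := by
      have := hexp b c
      rw [Fin.sum_univ_three] at this
      simp only [Matrix.cons_val_zero, Matrix.cons_val_one, Matrix.head_cons,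
        Matrix.cons_val_two, Matrix.tail_cons] at this
      rw [hzero01, hzero02] at this
      simp only [smul_zero, add_zero, smul_eq_mul, mul_zero] at this
      exact (mul_eq_zero.mp this).resolve_right habc
    have h1 : g 1 = 0 := by
      have := hexp a c
      rw [Fin.sum_univ_three] at this
      simp only [Matrix.cons_val_zero, Matrix.cons_val_one, Matrix.head_cons,
        Matrix.cons_val_two, Matrix.tail_cons] at this
      rw [hzero01 a c, hzero02 c a, hswap01 a b c] at this
      simp only [smul_zero, zero_add, add_zero, smul_eq_mul, mul_zero, mul_neg,
        neg_eq_zero] at this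
      exact (mul_eq_zero.mp this).resolve_right habc
    have h2 : g 2 = 0 := by
      have := hexp a b
      rw [Fin.sum_univ_three] at this
      simp only [Matrix.cons_val_zero, Matrix.cons_val_one, Matrix.head_cons,
        Matrix.cons_val_two, Matrix.tail_cons] at this
      have hc : η ![c, a, b] = η ![a, b, c] := by
        rw [hswap01 a c b, hswap12 a b c]; ring
      rw [hzero01 a b, hzero02 b a, hc] at this
      simp only [smul_zero, zero_add, add_zero, smul_eq_mul, mul_zero] at this
      exact (mul_eq_zero.mp this).resolve_right habc
    intro i; fin_cases i <;> assumption
  have hcard := hli.fintype_card_le_finrank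
  simp only [Fintype.card_fin] at hcard
  have hq := Submodule.finrank_quotient_add_finrank K
  omega
end

section
/- Let 𝒜 ⊆ ℝ³ be an open set, let C : 𝒜 → (alternating trilinear forms on ℝ³) be continuous, and suppose the set {a ∈ 𝒜 : C(a) ≠ 0} is dense in 𝒜. Let f : 𝒜 × ℝ³ → ℝ be continuously differentiable with f(a, α + 2πν) = f(a, α) for all ν ∈ ℤ³, and assume that for every (a,α) ∈ 𝒜 × ℝ³ the vector ∂f/∂α(a,α) ∈ ℝ³ lies in ker C(a), i.e. C(a)(∂f/∂α(a,α), u, v) = 0 for all u,v ∈ ℝ³. Then ∂f/∂α(a,α) = 0 for all (a,α) ∈ 𝒜 × ℝ³; that is, f is independent of the angles α. -/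
/-!
At a point where `C(a) ≠ 0`, the form `C(a)` is a nonzero multiple of the determinant, so its
kernel is trivial and `∂f/∂α (a, α) = 0`. Since `f` is `C¹`, `a ↦ ∂f/∂α (a, α)` is continuous on
`𝒜`, and it vanishes on a dense subset of `𝒜`, hence everywhere on `𝒜`.
-/

/-- The vector `∂f/∂α (a, α) ∈ ℝ³` of partial derivatives of `f` with respect to the second
group of variables (the angles). -/
noncomputable def dAngle3 (f : (Fin 3 → ℝ) × (Fin 3 → ℝ) → ℝ)
    (p : (Fin 3 → ℝ) × (Fin 3 → ℝ)) : Fin 3 → ℝ :=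
  fun k => fderiv ℝ (fun α => f (p.1, α)) p.2 (Pi.single k 1)

namespace AlternatingMap

variable {R M N : Type*} [CommRing R] [AddCommGroup M] [Module R M] [AddCommGroup N] [Module R N]

theorem map_update_basis {ι : Type*} [DecidableEq ι] (T : M [⋀^ι]→ₗ[R] N) (b : Module.Basis ι R M)
    (i : ι) (x : M) : T (Function.update b i x) = b.repr x i • T b := by
  change T.toMultilinearMap.toLinearMap b i x = ((b.coord i).smulRight (T b)) x
  congr 1
  refine b.ext fun j => ?_
  rcases eq_or_ne j i with rfl | hji
  · simp
  · simp [hji, T.map_update_self _ hji.symm]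

theorem map_eq_zero_of_apply_eq {n : ℕ} (T : M [⋀^Fin (n + 1)]→ₗ[R] N) {x : M}
    (hx : ∀ w : Fin n → M, T (Fin.cons x w) = 0) {v : Fin (n + 1) → M} {i : Fin (n + 1)}
    (hvi : v i = x) : T v = 0 := by
  rcases eq_or_ne i 0 with rfl | hi
  · rw [← Fin.cons_self_tail v, hvi, hx]
  · have hswap : (v ∘ Equiv.swap 0 i) 0 = x := by simp [hvi]
    rw [← neg_eq_zero, ← T.map_swap v hi.symm, ← Fin.cons_self_tail (v ∘ _), hswap, hx]

end AlternatingMap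

theorem AlternatingMap.eq_zero_of_forall_map_cons_eq_zero {K E : Type*} [Field K] [AddCommGroup E]
    [Module K E] [FiniteDimensional K E] {n : ℕ} (hn : Module.finrank K E = n + 1)
    {T : E [⋀^Fin (n + 1)]→ₗ[K] K} (hT : T ≠ 0) {x : E}
    (hx : ∀ w : Fin n → E, T (Fin.cons x w) = 0) : x = 0 := by
  classical
  let b := Module.finBasisOfFinrankEq K E hn
  have hTb : T b ≠ 0 := fun h => hT (by rw [T.eq_smul_basis_det b, h, zero_smul])
  refine b.ext_elem fun i => ?_
  have h := T.map_eq_zero_of_apply_eq hx (Function.update_self i x b)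
  rw [T.map_update_basis, smul_eq_mul, mul_eq_zero] at h
  simpa [hTb] using h

section PartialDerivative

variable {𝕜 E F G : Type*} [NontriviallyNormedField 𝕜] [NormedAddCommGroup E] [NormedSpace 𝕜 E]
  [NormedAddCommGroup F] [NormedSpace 𝕜 F] [NormedAddCommGroup G] [NormedSpace 𝕜 G]
  {f : E × F → G} {s : Set (E × F)}

theorem fderiv_comp_prodMk_right {p : E × F} (hf : DifferentiableAt 𝕜 f p) :
    fderiv 𝕜 (fun y => f (p.1, y)) p.2 = (fderiv 𝕜 f p).comp (.inr 𝕜 E F) :=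
  (hf.hasFDerivAt.comp p.2 (hasFDerivAt_prodMk_right p.1 p.2)).fderiv

theorem ContDiffOn.continuousOn_fderiv_right (hf : ContDiffOn 𝕜 1 f s) (hs : IsOpen s) :
    ContinuousOn (fun p => fderiv 𝕜 (fun y => f (p.1, y)) p.2) s := by
  refine ((hf.continuousOn_fderiv_of_isOpen hs le_rfl).clm_comp
    (continuousOn_const (c := .inr 𝕜 E F))).congr fun p hp => ?_
  exact fderiv_comp_prodMk_right ((hf.differentiableOn one_ne_zero).differentiableAt
    (hs.mem_nhds hp))

end PartialDerivative

theorem continuousOn_dAngle3 {𝒜 : Set (Fin 3 → ℝ)} (hopen : IsOpen 𝒜)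
    {f : (Fin 3 → ℝ) × (Fin 3 → ℝ) → ℝ} (hf : ContDiffOn ℝ 1 f (𝒜 ×ˢ Set.univ))
    (α : Fin 3 → ℝ) : ContinuousOn (fun a => dAngle3 f (a, α)) 𝒜 := by
  have h := (hf.continuousOn_fderiv_right (hopen.prod isOpen_univ)).comp
    (Continuous.prodMk_left α).continuousOn fun a ha => ⟨ha, trivial⟩
  exact continuousOn_pi.2 fun k =>
    (ContinuousLinearMap.apply ℝ ℝ (Pi.single k 1)).continuous.comp_continuousOn h

theorem statement6_general (𝒜 : Set (Fin 3 → ℝ)) (hopen : IsOpen 𝒜)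
    (C : (Fin 3 → ℝ) → ((Fin 3 → ℝ) [⋀^Fin 3]→ₗ[ℝ] ℝ))
    (hdense : 𝒜 ⊆ closure {a ∈ 𝒜 | C a ≠ 0})
    (f : (Fin 3 → ℝ) × (Fin 3 → ℝ) → ℝ)
    (hf : ContDiffOn ℝ 1 f (𝒜 ×ˢ (Set.univ : Set (Fin 3 → ℝ))))
    (hker : ∀ a ∈ 𝒜, ∀ α : Fin 3 → ℝ, ∀ u v : Fin 3 → ℝ,
      C a ![dAngle3 f (a, α), u, v] = 0) :
    ∀ a ∈ 𝒜, ∀ α : Fin 3 → ℝ, dAngle3 f (a, α) = 0 := by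
  intro a ha α
  have hzero : Set.EqOn (fun b => dAngle3 f (b, α)) 0 {b ∈ 𝒜 | C b ≠ 0} := fun b ⟨hb, hCb⟩ =>
    (C b).eq_zero_of_forall_map_cons_eq_zero (Module.finrank_fin_fun ℝ) hCb fun w => by
      convert hker b hb α (w 0) (w 1) using 3
      ext i
      fin_cases i <;> rfl
  exact hzero.of_subset_closure (continuousOn_dAngle3 hopen hf α) continuousOn_const
    (Set.sep_subset _ _) hdense ha

/-- Let `𝒜 ⊆ ℝ³` be open, `C : 𝒜 → {alternating trilinear forms on ℝ³}`
continuous, with `{a ∈ 𝒜 : C(a) ≠ 0}` dense in `𝒜`.  Let `f : 𝒜 × ℝ³ → ℝ` be continuously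
differentiable, `2π`-periodic in the angles, with `∂f/∂α (a, α) ∈ ker C(a)` always.
Then `∂f/∂α ≡ 0` on `𝒜 × ℝ³`: `f` is independent of the angles. -/
theorem statement6 (𝒜 : Set (Fin 3 → ℝ)) (hopen : IsOpen 𝒜)
    (C : (Fin 3 → ℝ) → ((Fin 3 → ℝ) [⋀^Fin 3]→ₗ[ℝ] ℝ))
    (hCcont : ∀ u v w : Fin 3 → ℝ, ContinuousOn (fun a => C a ![u, v, w]) 𝒜)
    (hdense : 𝒜 ⊆ closure {a ∈ 𝒜 | C a ≠ 0})
    (f : (Fin 3 → ℝ) × (Fin 3 → ℝ) → ℝ)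
    (hf : ContDiffOn ℝ 1 f (𝒜 ×ˢ (Set.univ : Set (Fin 3 → ℝ))))
    (hper : ∀ (a α : Fin 3 → ℝ) (ν : Fin 3 → ℤ),
      f (a, α + fun i => 2 * Real.pi * (ν i : ℝ)) = f (a, α))
    (hker : ∀ a ∈ 𝒜, ∀ α : Fin 3 → ℝ, ∀ u v : Fin 3 → ℝ,
      C a ![dAngle3 f (a, α), u, v] = 0) :
    ∀ a ∈ 𝒜, ∀ α : Fin 3 → ℝ, dAngle3 f (a, α) = 0 :=
  statement6_general 𝒜 hopen C hdense f hf hker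
end

section
/- Let 𝒜 ⊆ ℝⁿ, let C : 𝒜 → (alternating trilinear forms on ℝⁿ) be any map, and let f : 𝒜 × ℝⁿ → ℝ be such that for each a ∈ 𝒜 the function α ↦ f(a,α) is continuously differentiable and 2π-periodic in each variable. Assume that for all (a,α) ∈ 𝒜 × ℝⁿ the vector ∂f/∂α(a,α) lies in ker C(a), i.e. C(a)(∂f/∂α(a,α), u, v) = 0 for all u,v ∈ ℝⁿ. Then for every a ∈ 𝒜 and every ν ∈ ℤⁿ with f̂_ν(a) ≠ 0, one has ν ∈ ker C(a), i.e. C(a)(ν, u, v) = 0 for all u,v ∈ ℝⁿ. Equivalently, Sp(f,a) ⊆ ℤⁿ ∩ ker C(a) for every a ∈ 𝒜. -/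
open MeasureTheory

/-- The `ν`-th Fourier coefficient of a function `g : ℝⁿ → ℂ` that is `2π`-periodic in each
variable: `ĝ_ν = (2π)^{-n} ∫_{[0,2π]ⁿ} g(α) e^{-i ν·α} dα`. -/
noncomputable def fourierCoeffn {n : ℕ} (g : (Fin n → ℝ) → ℂ) (ν : Fin n → ℤ) : ℂ :=
  (1 / (2 * Real.pi) ^ n : ℂ) *
    ∫ α in Set.univ.pi (fun _ : Fin n => Set.Icc (0 : ℝ) (2 * Real.pi)),
      g α * Complex.exp (-(Complex.I * ((∑ k, (ν k : ℝ) * α k : ℝ) : ℂ)))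

/-- The vector `∂f/∂α (a, α) ∈ ℝⁿ` of partial derivatives of `f` with respect to the second
group of variables. -/
noncomputable def dAngle {n : ℕ} (f : (Fin n → ℝ) × (Fin n → ℝ) → ℝ)
    (p : (Fin n → ℝ) × (Fin n → ℝ)) : Fin n → ℝ :=
  fun k => fderiv ℝ (fun α => f (p.1, α)) p.2 (Pi.single k 1)

/-!
Fix `a`, `u`, `v` and let `w` represent the linear form `x ↦ C(a)(x, u, v)`, so that
`C(a)(x, u, v) = ⟨x, w⟩`. The hypothesis says `⟨∂f/∂α, w⟩ = 0`, so `f(a, ·)` is constant along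
the lines `t ↦ α + t w`. Translating the integral over the period cube by `t w` then gives
`f̂_ν(a) = e^{-i t ⟨ν, w⟩} f̂_ν(a)` for every `t`; if `⟨ν, w⟩ ≠ 0`, taking `t ⟨ν, w⟩ = π` forces
`f̂_ν(a) = 0`.
-/

theorem LinearMap.apply_eq_sum_smul_apply_single {R M ι : Type*} [CommSemiring R]
    [AddCommMonoid M] [Module R M] [Fintype ι] [DecidableEq ι] (L : (ι → R) →ₗ[R] M)
    (x : ι → R) : L x = ∑ i, x i • L (Pi.single i 1) := by
  conv_lhs => rw [← Finset.univ_sum_single x]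
  simp only [map_sum, ← map_smul, ← Pi.single_smul', smul_eq_mul, mul_one]

theorem LinearMap.apply_fun_apply_single_comm {R ι : Type*} [CommSemiring R] [Fintype ι]
    [DecidableEq ι] (L D : (ι → R) →ₗ[R] R) :
    L (fun i => D (Pi.single i 1)) = D (fun i => L (Pi.single i 1)) := by
  rw [L.apply_eq_sum_smul_apply_single, D.apply_eq_sum_smul_apply_single]
  exact Finset.sum_congr rfl fun i _ => mul_comm _ _

theorem add_smul_eq_of_fderiv_apply_eq_zero {E F : Type*} [NormedAddCommGroup E]
    [NormedSpace ℝ E] [NormedAddCommGroup F] [NormedSpace ℝ F] {φ : E → F}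
    (hφ : Differentiable ℝ φ) {w : E} (hw : ∀ β, fderiv ℝ φ β w = 0) (α : E) (t : ℝ) :
    φ (α + t • w) = φ α := by
  have hline : ∀ s : ℝ, HasDerivAt (fun t : ℝ => φ (α + t • w)) 0 s := fun s => by
    have h := (hφ (α + s • w)).hasFDerivAt.comp_hasDerivAt s
      (((hasDerivAt_id' s).smul_const w).const_add α)
    rwa [one_smul, hw] at h
  simpa using
    is_const_of_deriv_eq_zero (fun s => (hline s).differentiableAt) (fun s => (hline s).deriv) t 0

theorem AlternatingMap.toLinearMap_apply_fin_three {R M N : Type*} [CommSemiring R]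
    [AddCommMonoid M] [Module R M] [AddCommMonoid N] [Module R N] (C : M [⋀^Fin 3]→ₗ[R] N)
    (u v x : M) : C.toMultilinearMap.toLinearMap ![0, u, v] 0 x = C ![x, u, v] := by
  rw [MultilinearMap.toLinearMap_apply, Matrix.vecCons, Fin.update_cons_zero]
  rfl

section PeriodicCube

open Set Submodule
open scoped Pointwise

variable {n : ℕ}

noncomputable def cubeBasis (n : ℕ) : Module.Basis (Fin n) ℝ (Fin n → ℝ) :=
  (Pi.basisFun ℝ (Fin n)).isUnitSMul fun _ => Real.two_pi_pos.ne'.isUnit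

theorem cubeBasis_repr_apply (x : Fin n → ℝ) (i : Fin n) :
    (cubeBasis n).repr x i = (2 * Real.pi)⁻¹ * x i := by
  simp [cubeBasis, Module.Basis.repr_isUnitSMul, Units.smul_def]

theorem mem_span_cubeBasis_iff {x : Fin n → ℝ} :
    x ∈ span ℤ (range (cubeBasis n)) ↔ ∃ μ : Fin n → ℤ, x = fun i => 2 * Real.pi * (μ i : ℝ) := by
  simp only [(cubeBasis n).mem_span_iff_repr_mem ℤ, cubeBasis_repr_apply, mem_range,
    algebraMap_int_eq, eq_intCast]
  constructor
  · intro h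
    choose μ hμ using h
    exact ⟨μ, funext fun i => by rw [hμ i]; field_simp⟩
  · rintro ⟨μ, rfl⟩ i
    exact ⟨μ i, by field_simp⟩

theorem fundamentalDomain_cubeBasis :
    ZSpan.fundamentalDomain (cubeBasis n) = univ.pi fun _ => Ico 0 (2 * Real.pi) := by
  ext x
  simp only [ZSpan.mem_fundamentalDomain, cubeBasis_repr_apply, mem_pi, mem_univ, true_implies,
    mem_Ico]
  refine forall_congr' fun i => ?_
  rw [inv_mul_lt_iff₀ Real.two_pi_pos, mul_one,
    mul_nonneg_iff_of_pos_left (inv_pos.mpr Real.two_pi_pos)]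

theorem cube_ae_eq_fundamentalDomain_cubeBasis :
    univ.pi (fun _ : Fin n => Icc 0 (2 * Real.pi)) =ᵐ[volume]
      ZSpan.fundamentalDomain (cubeBasis n) := by
  rw [fundamentalDomain_cubeBasis]
  exact Measure.pi_Ico_ae_eq_pi_Icc.symm

theorem setIntegral_cube_add_eq_of_periodic {E : Type*} [NormedAddCommGroup E] [NormedSpace ℝ E]
    (G : (Fin n → ℝ) → E)
    (hG : ∀ (x : Fin n → ℝ) (μ : Fin n → ℤ), G (x + fun i => 2 * Real.pi * (μ i : ℝ)) = G x)
    (c : Fin n → ℝ) :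
    ∫ α in univ.pi (fun _ => Icc 0 (2 * Real.pi)), G (α + c) =
      ∫ α in univ.pi (fun _ => Icc 0 (2 * Real.pi)), G α := by
  have : Countable (span ℤ (range (cubeBasis n))).toAddSubgroup :=
    inferInstanceAs (Countable (span ℤ (range (cubeBasis n))))
  have hD := ZSpan.isAddFundamentalDomain' (cubeBasis n) volume
  have hGΛ : ∀ (g : (span ℤ (range (cubeBasis n))).toAddSubgroup) x, G (g +ᵥ x) = G x := by
    rintro ⟨g, hg⟩ x
    obtain ⟨μ, rfl⟩ := mem_span_cubeBasis_iff.mp hg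
    exact (congrArg G (add_comm _ x)).trans (hG x μ)
  calc ∫ α in univ.pi (fun _ => Icc 0 (2 * Real.pi)), G (α + c)
      = ∫ α in ZSpan.fundamentalDomain (cubeBasis n), G (α + c) :=
        setIntegral_congr_set cube_ae_eq_fundamentalDomain_cubeBasis
    _ = ∫ α in (-c) +ᵥ ZSpan.fundamentalDomain (cubeBasis n), G (α + c) :=
        hD.setIntegral_eq (hD.vadd_of_comm (-c)) fun g x =>
          (congrArg G (add_assoc (g : Fin n → ℝ) x c)).trans (hGΛ g (x + c))
    _ = ∫ α in ZSpan.fundamentalDomain (cubeBasis n), G α := by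
        rw [← Set.image_vadd, (measurePreserving_vadd (-c) volume).setIntegral_image_emb
          (measurableEmbedding_const_vadd _)]
        simp
    _ = ∫ α in univ.pi (fun _ => Icc 0 (2 * Real.pi)), G α :=
        (setIntegral_congr_set cube_ae_eq_fundamentalDomain_cubeBasis).symm

end PeriodicCube

section FourierPhase

variable {n : ℕ}

theorem exp_neg_I_sum_mul_add (ν : Fin n → ℤ) (α β : Fin n → ℝ) :
    Complex.exp (-(Complex.I * ((∑ k, (ν k : ℝ) * (α + β) k : ℝ) : ℂ))) =
      Complex.exp (-(Complex.I * ((∑ k, (ν k : ℝ) * α k : ℝ) : ℂ))) *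
        Complex.exp (-(Complex.I * ((∑ k, (ν k : ℝ) * β k : ℝ) : ℂ))) := by
  simp only [Pi.add_apply, mul_add, Finset.sum_add_distrib, Complex.ofReal_add, neg_add,
    Complex.exp_add]

theorem exp_neg_I_sum_mul_two_pi_int (ν μ : Fin n → ℤ) :
    Complex.exp (-(Complex.I * ((∑ k, (ν k : ℝ) * (2 * Real.pi * (μ k : ℝ)) : ℝ) : ℂ))) = 1 := by
  convert Complex.exp_int_mul_two_pi_mul_I (-∑ k, ν k * μ k) using 2
  push_cast
  simp only [Finset.mul_sum, Finset.sum_mul, ← Finset.sum_neg_distrib]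
  exact Finset.sum_congr rfl fun k _ => by ring

theorem fourierCoeffn_eq_exp_mul_of_add_eq (g : (Fin n → ℝ) → ℂ)
    (hper : ∀ (α : Fin n → ℝ) (μ : Fin n → ℤ), g (α + fun i => 2 * Real.pi * (μ i : ℝ)) = g α)
    {s : Fin n → ℝ} (hs : ∀ α, g (α + s) = g α) (ν : Fin n → ℤ) :
    fourierCoeffn g ν =
      Complex.exp (-(Complex.I * ((∑ k, (ν k : ℝ) * s k : ℝ) : ℂ))) * fourierCoeffn g ν := by
  unfold fourierCoeffn
  rw [mul_left_comm _ (1 / _ : ℂ)]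
  congr 1
  refine (setIntegral_cube_add_eq_of_periodic _ (fun α μ => ?_) s).symm.trans ?_
  · rw [hper, exp_neg_I_sum_mul_add, exp_neg_I_sum_mul_two_pi_int, mul_one]
  · simp only [hs, exp_neg_I_sum_mul_add, ← integral_const_mul]
    congr 1 with α
    ring

theorem eq_zero_of_forall_eq_exp_mul {z : ℂ} {c : ℝ} (hc : c ≠ 0)
    (h : ∀ t : ℝ, z = Complex.exp (-(Complex.I * ((t * c : ℝ) : ℂ))) * z) : z = 0 := by
  have hπ := h (Real.pi / c)
  rw [div_mul_cancel₀ _ hc, show -(Complex.I * (Real.pi : ℂ)) = -(Real.pi * Complex.I) by ring,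
    Complex.exp_neg, Complex.exp_pi_mul_I] at hπ
  linear_combination hπ / 2

end FourierPhase

/-- Let `𝒜 ⊆ ℝⁿ`, let `C` assign to each point of `𝒜` an alternating
trilinear form on `ℝⁿ`, and let `f : 𝒜 × ℝⁿ → ℝ` be, for each `a ∈ 𝒜`, continuously
differentiable and `2π`-periodic in the angles.  If `∂f/∂α (a, α) ∈ ker C(a)` for all
`(a, α)`, then for every `a ∈ 𝒜` and `ν ∈ ℤⁿ` with `f̂_ν(a) ≠ 0` one has `ν ∈ ker C(a)`:
`Sp(f, a) ⊆ ℤⁿ ∩ ker C(a)`. -/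
theorem statement8 (n : ℕ) (𝒜 : Set (Fin n → ℝ))
    (C : (Fin n → ℝ) → ((Fin n → ℝ) [⋀^Fin 3]→ₗ[ℝ] ℝ))
    (f : (Fin n → ℝ) × (Fin n → ℝ) → ℝ)
    (hreg : ∀ a ∈ 𝒜, ContDiff ℝ 1 (fun α => f (a, α)))
    (hper : ∀ a ∈ 𝒜, ∀ (α : Fin n → ℝ) (ν : Fin n → ℤ),
      f (a, α + fun i => 2 * Real.pi * (ν i : ℝ)) = f (a, α))
    (hker : ∀ a ∈ 𝒜, ∀ α : Fin n → ℝ, ∀ u v : Fin n → ℝ,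
      C a ![dAngle f (a, α), u, v] = 0) :
    ∀ a ∈ 𝒜, ∀ ν : Fin n → ℤ,
      fourierCoeffn (fun α => (f (a, α) : ℂ)) ν ≠ 0 →
      ∀ u v : Fin n → ℝ, C a ![(fun i => (ν i : ℝ)), u, v] = 0 := by
  intro a ha ν hν u v
  set L := (C a).toMultilinearMap.toLinearMap ![0, u, v] 0
  set w : Fin n → ℝ := fun k => L (Pi.single k 1)
  have hflow : ∀ α (t : ℝ), f (a, α + t • w) = f (a, α) :=
    add_smul_eq_of_fderiv_apply_eq_zero ((hreg a ha).differentiable one_ne_zero) fun β =>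
      calc fderiv ℝ (fun α => f (a, α)) β w = L (dAngle f (a, β)) :=
            (L.apply_fun_apply_single_comm (fderiv ℝ (fun α => f (a, α)) β).toLinearMap).symm
        _ = 0 := ((C a).toLinearMap_apply_fin_three u v _).trans (hker a ha β u v)
  have hcoeff : ∀ t : ℝ, fourierCoeffn (fun α => (f (a, α) : ℂ)) ν =
      Complex.exp (-(Complex.I * ((t * L (fun i => (ν i : ℝ)) : ℝ) : ℂ))) *
        fourierCoeffn (fun α => (f (a, α) : ℂ)) ν := fun t => by
    convert fourierCoeffn_eq_exp_mul_of_add_eq (fun α => (f (a, α) : ℂ))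
      (fun α μ => by rw [hper a ha]) (s := t • w) (fun α => by rw [hflow]) ν using 6
    rw [L.apply_eq_sum_smul_apply_single, Finset.mul_sum]
    simp only [Pi.smul_apply, smul_eq_mul, mul_left_comm, w]
  rw [← (C a).toLinearMap_apply_fin_three]
  by_contra hc
  exact hν (eq_zero_of_forall_eq_exp_mul hc hcoeff)
end

section
/- Let n ≥ 1, let V be the free real vector space with basis vectors e₁, …, eₙ, f₁, …, fₙ (i.e. V = (Fin n ⊕ Fin n) → ℝ with its standard basis), and work in the exterior algebra Λ(V) over ℝ. Let σ_s := Σᵢ eᵢ ∧ fᵢ, and let β := Σ_{i<j} b_{ij} eᵢ ∧ eⱼ for arbitrary real coefficients b_{ij}. Then (σ_s + β)ⁿ = σ_sⁿ in Λ(V). -/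
/-!
Let `W` be the span of the `eᵢ`. Products of vectors with at least `m` factors in `W` span a
multiplicative filtration `F m` of the exterior algebra, and `F m = 0` once `m > dim W = n`,
because such a product is an alternating form evaluated on a linearly dependent family.
Since `σ_s ∈ F 1` and `β ∈ F 2`, the identity
`(x + y)ᵏ⁺¹ - xᵏ⁺¹ = ((x + y)ᵏ - xᵏ) (x + y) + xᵏ y` shows inductively that
`(σ_s + β)ᵏ - σ_sᵏ ∈ F (k + 1)`; for `k = n` the right-hand side is `F (n + 1) = 0`.
-/

open ExteriorAlgebra Module

namespace ExteriorAlgebra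

section Filtration

variable {R M : Type*} [CommRing R] [AddCommGroup M] [Module R M]

/-- The `m`-th power of the ideal generated by `ι R '' W`. -/
def filtrationOf (W : Submodule R M) (m : ℕ) : Submodule R (ExteriorAlgebra R M) :=
  Submodule.span R {x | ∃ l s : List M,
    s.Sublist l ∧ m ≤ s.length ∧ (∀ v ∈ s, v ∈ W) ∧ (l.map (ι R)).prod = x}

variable {W : Submodule R M}

theorem one_mem_filtrationOf_zero : (1 : ExteriorAlgebra R M) ∈ filtrationOf W 0 :=
  Submodule.subset_span ⟨[], [], List.Sublist.refl _, le_rfl, by simp, by simp⟩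

theorem ι_mem_filtrationOf_zero (v : M) : ι R v ∈ filtrationOf W 0 :=
  Submodule.subset_span ⟨[v], [], List.nil_sublist _, le_rfl, by simp, by simp⟩

theorem ι_mem_filtrationOf_one {v : M} (hv : v ∈ W) : ι R v ∈ filtrationOf W 1 :=
  Submodule.subset_span
    ⟨[v], [v], List.Sublist.refl _, le_rfl, by simpa using hv, by simp⟩

theorem filtrationOf_antitone : Antitone (filtrationOf (R := R) W) := fun _ _ hab =>
  Submodule.span_mono fun _ ⟨l, s, hs, hlen, hW, hx⟩ => ⟨l, s, hs, hab.trans hlen, hW, hx⟩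

theorem filtrationOf_mul_le (a b : ℕ) :
    filtrationOf W a * filtrationOf W b ≤ filtrationOf W (a + b) := by
  rw [filtrationOf, filtrationOf, Submodule.span_mul_span, Submodule.span_le]
  rintro _ ⟨_, ⟨l, s, hs, hlen, hW, rfl⟩, _, ⟨l', s', hs', hlen', hW', rfl⟩, rfl⟩
  refine Submodule.subset_span ⟨l ++ l', s ++ s', hs.append hs', ?_, ?_, ?_⟩
  · simp only [List.length_append]
    omega
  · simpa [or_imp, forall_and] using ⟨hW, hW'⟩
  · simp

theorem mul_mem_filtrationOf {x y : ExteriorAlgebra R M} {a b : ℕ}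
    (hx : x ∈ filtrationOf W a) (hy : y ∈ filtrationOf W b) :
    x * y ∈ filtrationOf W (a + b) :=
  filtrationOf_mul_le a b (Submodule.mul_mem_mul hx hy)

theorem pow_mem_filtrationOf {x : ExteriorAlgebra R M} {a : ℕ} (hx : x ∈ filtrationOf W a)
    (k : ℕ) : x ^ k ∈ filtrationOf W (k * a) := by
  induction k with
  | zero => simpa using one_mem_filtrationOf_zero
  | succ k ih => simpa [pow_succ, add_mul] using mul_mem_filtrationOf ih hx

theorem add_pow_sub_pow_mem_filtrationOf {x y : ExteriorAlgebra R M}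
    (hx : x ∈ filtrationOf W 1) (hy : y ∈ filtrationOf W 2) (k : ℕ) :
    (x + y) ^ k - x ^ k ∈ filtrationOf W (k + 1) := by
  induction k with
  | zero => simp
  | succ k ih =>
    have hxy : x + y ∈ filtrationOf W 1 := add_mem hx (filtrationOf_antitone (by norm_num) hy)
    have hstep : (x + y) ^ (k + 1) - x ^ (k + 1) =
        ((x + y) ^ k - x ^ k) * (x + y) + x ^ k * y := by
      noncomm_ring
    rw [hstep]
    refine add_mem (mul_mem_filtrationOf ih hxy) ?_
    simpa using mul_mem_filtrationOf (pow_mem_filtrationOf hx k) hy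

end Filtration

section Field

variable {K V : Type*} [Field K] [AddCommGroup V] [Module K V]

theorem list_prod_map_ι_eq_zero {W : Submodule K V} [FiniteDimensional K W] {l s : List V}
    (hs : s.Sublist l) (hlen : finrank K W < s.length) (hW : ∀ v ∈ s, v ∈ W) :
    (l.map (ι K)).prod = 0 := by
  obtain ⟨f, hf⟩ := List.sublist_iff_exists_fin_orderEmbedding_get_eq.1 hs
  have hprod : (l.map (ι K)).prod = ιMulti K l.length l.get := by
    rw [ιMulti_apply]
    conv_lhs => rw [← List.ofFn_get l, List.map_ofFn]
    rfl
  rw [hprod]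
  refine AlternatingMap.map_linearDependent _ _ fun hli => hlen.not_ge ?_
  let u : Fin s.length → W := fun j => ⟨s.get j, hW _ (List.get_mem _ _)⟩
  have hu : LinearIndependent K u := by
    refine LinearIndependent.of_comp W.subtype ?_
    have hcomp : W.subtype ∘ u = l.get ∘ f := funext hf
    rw [hcomp]
    exact hli.comp _ f.injective
  simpa using hu.fintype_card_le_finrank

theorem filtrationOf_eq_bot (W : Submodule K V) [FiniteDimensional K W] {m : ℕ}
    (hm : finrank K W < m) : filtrationOf W m = ⊥ := by
  rw [filtrationOf, Submodule.span_eq_bot]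
  rintro _ ⟨l, s, hs, hlen, hW, rfl⟩
  exact list_prod_map_ι_eq_zero hs (hm.trans_le hlen) hW

end Field

end ExteriorAlgebra

theorem statement12_general (n : ℕ) (b : Fin n → Fin n → ℝ) :
    let V := (Fin n ⊕ Fin n) → ℝ
    let e : Fin n → ExteriorAlgebra ℝ V :=
      fun i => ExteriorAlgebra.ι ℝ (Pi.single (Sum.inl i) (1 : ℝ))
    let f : Fin n → ExteriorAlgebra ℝ V :=
      fun i => ExteriorAlgebra.ι ℝ (Pi.single (Sum.inr i) (1 : ℝ))
    let σs : ExteriorAlgebra ℝ V := ∑ i, e i * f i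
    let β : ExteriorAlgebra ℝ V :=
      ∑ p ∈ Finset.univ.filter (fun p : Fin n × Fin n => p.1 < p.2),
        b p.1 p.2 • (e p.1 * e p.2)
    (σs + β) ^ n = σs ^ n := by
  intro V e f σs β
  let W : Submodule ℝ V := Submodule.span ℝ (Set.range fun i => Pi.single (Sum.inl i) 1)
  have he (i : Fin n) : e i ∈ filtrationOf W 1 :=
    ι_mem_filtrationOf_one (Submodule.subset_span ⟨i, rfl⟩)
  have hef (i : Fin n) : e i * f i ∈ filtrationOf W (1 + 0) :=
    mul_mem_filtrationOf (he i) (ι_mem_filtrationOf_zero _)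
  have hee (i j : Fin n) : e i * e j ∈ filtrationOf W (1 + 1) :=
    mul_mem_filtrationOf (he i) (he j)
  have hσs : σs ∈ filtrationOf W 1 := Submodule.sum_mem _ fun i _ => hef i
  have hβ : β ∈ filtrationOf W 2 :=
    Submodule.sum_mem _ fun p _ => Submodule.smul_mem _ _ (hee _ _)
  have hW : finrank ℝ W < n + 1 :=
    Nat.lt_succ_of_le ((finrank_range_le_card _).trans_eq (Fintype.card_fin n))
  have key := add_pow_sub_pow_mem_filtrationOf hσs hβ n
  rwa [filtrationOf_eq_bot W hW, Submodule.mem_bot, sub_eq_zero] at key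

/-- In the exterior algebra of `V = (Fin n ⊕ Fin n) → ℝ` with standard
basis vectors `e i` (left summand) and `f i` (right summand), let `σ_s = ∑ i, e i ∧ f i` and
`β = ∑_{i<j} b i j • e i ∧ e j`.  Then `(σ_s + β)ⁿ = σ_sⁿ`. -/
theorem statement12 (n : ℕ) (hn : 1 ≤ n) (b : Fin n → Fin n → ℝ) :
    let V := (Fin n ⊕ Fin n) → ℝ
    let e : Fin n → ExteriorAlgebra ℝ V :=
      fun i => ExteriorAlgebra.ι ℝ (Pi.single (Sum.inl i) (1 : ℝ))
    let f : Fin n → ExteriorAlgebra ℝ V :=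
      fun i => ExteriorAlgebra.ι ℝ (Pi.single (Sum.inr i) (1 : ℝ))
    let σs : ExteriorAlgebra ℝ V := ∑ i, e i * f i
    let β : ExteriorAlgebra ℝ V :=
      ∑ p ∈ Finset.univ.filter (fun p : Fin n × Fin n => p.1 < p.2),
        b p.1 p.2 • (e p.1 * e p.2)
    (σs + β) ^ n = σs ^ n :=
  statement12_general n b
end

section
/- Let n ≥ 1, let V be the free real vector space with basis vectors e₁, …, eₙ, f₁, …, fₙ (i.e. V = (Fin n ⊕ Fin n) → ℝ with its standard basis), and work in the exterior algebra Λ(V) over ℝ. Let σ_s := Σᵢ eᵢ ∧ fᵢ, let β := Σ_{i<j} b_{ij} eᵢ ∧ eⱼ and γ := Σ_{i<j} c_{ij} eᵢ ∧ eⱼ for arbitrary real coefficients b_{ij}, c_{ij}. Then (σ_s + β)^{n-1} ∧ γ = 0 in Λ(V). -/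
open ExteriorAlgebra

variable {R M : Type*} [CommRing R] [AddCommGroup M] [Module R M]

theorem st13.ι_mul_prod_of_mem (v : M) :
    ∀ l : List M, v ∈ l → ι R v * (l.map (ι R)).prod = 0 := by
  intro l
  induction l with
  | nil => simp
  | cons a t ih =>
    intro hv
    rw [List.map_cons, List.prod_cons, ← mul_assoc]
    rcases List.mem_cons.mp hv with h | h
    · rw [h, ι_sq_zero, zero_mul]
    · have hsw : ι R v * ι R a = -(ι R a * ι R v) := by
        rw [eq_neg_iff_add_eq_zero]
        exact ι_add_mul_swap v a
      rw [hsw, neg_mul, mul_assoc, ih h, mul_zero, neg_zero]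

theorem st13.prod_eq_zero_of_not_nodup :
    ∀ l : List M, ¬ l.Nodup → (l.map (ι R)).prod = 0 := by
  intro l
  induction l with
  | nil => simp
  | cons a t ih =>
    intro h
    rw [List.map_cons, List.prod_cons]
    rw [List.nodup_cons] at h
    push_neg at h
    by_cases ha : a ∈ t
    · exact st13.ι_mul_prod_of_mem a t ha
    · rw [ih (h ha), mul_zero]

namespace st13

def G (n k : ℕ) : Set (ExteriorAlgebra ℝ ((Fin n ⊕ Fin n) → ℝ)) :=
  { x | ∃ l : List (Fin n ⊕ Fin n), k ≤ (l.filterMap Sum.getLeft?).length ∧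
      x = (l.map fun s => ι ℝ (Pi.single s (1 : ℝ))).prod }

noncomputable def T (n k : ℕ) : Submodule ℝ (ExteriorAlgebra ℝ ((Fin n ⊕ Fin n) → ℝ)) :=
  Submodule.span ℝ (G n k)

theorem mul_mem_T {n j k : ℕ} {x y : ExteriorAlgebra ℝ ((Fin n ⊕ Fin n) → ℝ)}
    (hx : x ∈ T n j) (hy : y ∈ T n k) : x * y ∈ T n (j + k) := by
  have hle : T n j * T n k ≤ T n (j + k) := by
    rw [T, T, Submodule.span_mul_span]
    apply Submodule.span_mono
    rintro z hz
    rw [Set.mem_mul] at hz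
    obtain ⟨a, ⟨l₁, hl₁, rfl⟩, bb, ⟨l₂, hl₂, rfl⟩, rfl⟩ := hz
    refine ⟨l₁ ++ l₂, ?_, ?_⟩
    · rw [List.filterMap_append, List.length_append]
      omega
    · rw [List.map_append, List.prod_append]
  exact hle (Submodule.mul_mem_mul hx hy)

theorem pow_mem_T {n : ℕ} {x : ExteriorAlgebra ℝ ((Fin n ⊕ Fin n) → ℝ)}
    (hx : x ∈ T n 1) (m : ℕ) : x ^ m ∈ T n m := by
  induction m with
  | zero =>
    exact Submodule.subset_span ⟨[], by simp, by simp⟩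
  | succ m ih =>
    rw [pow_succ]
    exact mul_mem_T ih hx

theorem single_inj (n : ℕ) :
    Function.Injective (fun s : Fin n ⊕ Fin n => (Pi.single s (1 : ℝ) : (Fin n ⊕ Fin n) → ℝ)) := by
  intro s t h
  by_contra hst
  have := congrFun h s
  simp only [Pi.single_eq_same, Pi.single_eq_of_ne hst] at this
  exact one_ne_zero this

theorem T_eq_bot {n : ℕ} {x : ExteriorAlgebra ℝ ((Fin n ⊕ Fin n) → ℝ)}
    (hx : x ∈ T n (n + 1)) : x = 0 := by
  have : T n (n + 1) ≤ ⊥ := by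
    rw [T, Submodule.span_le]
    rintro z ⟨l, hl, rfl⟩
    simp only [SetLike.mem_coe, Submodule.mem_bot]
    have hnotnodup : ¬ (l.map fun s => (Pi.single s (1 : ℝ) : (Fin n ⊕ Fin n) → ℝ)).Nodup := by
      rw [List.nodup_map_iff (single_inj n)]
      intro hnd
      have h1 : (l.filterMap Sum.getLeft?).Nodup := by
        refine hnd.filterMap ?_
        rintro a a' bb ha ha'
        rw [Option.mem_def, Sum.getLeft?_eq_some_iff] at ha ha'
        rw [ha, ha']
      have h2 := h1.length_le_card
      simp only [Fintype.card_fin] at h2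
      omega
    have := st13.prod_eq_zero_of_not_nodup (R := ℝ)
      (l.map fun s => (Pi.single s (1 : ℝ) : (Fin n ⊕ Fin n) → ℝ)) hnotnodup
    rw [List.map_map] at this
    exact this
  simpa using this hx

end st13

/-- In the exterior algebra of `V = (Fin n ⊕ Fin n) → ℝ` with standard
basis vectors `e i` (left summand) and `f i` (right summand), let `σ_s = ∑ i, e i ∧ f i`,
`β = ∑_{i<j} b i j • e i ∧ e j` and `γ = ∑_{i<j} c i j • e i ∧ e j`.  Then
`(σ_s + β)^{n-1} ∧ γ = 0`. -/
theorem statement13 (n : ℕ) (hn : 1 ≤ n) (b c : Fin n → Fin n → ℝ) :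
    let V := (Fin n ⊕ Fin n) → ℝ
    let e : Fin n → ExteriorAlgebra ℝ V :=
      fun i => ExteriorAlgebra.ι ℝ (Pi.single (Sum.inl i) (1 : ℝ))
    let f : Fin n → ExteriorAlgebra ℝ V :=
      fun i => ExteriorAlgebra.ι ℝ (Pi.single (Sum.inr i) (1 : ℝ))
    let σs : ExteriorAlgebra ℝ V := ∑ i, e i * f i
    let β : ExteriorAlgebra ℝ V :=
      ∑ p ∈ Finset.univ.filter (fun p : Fin n × Fin n => p.1 < p.2),
        b p.1 p.2 • (e p.1 * e p.2)
    let γ : ExteriorAlgebra ℝ V :=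
      ∑ p ∈ Finset.univ.filter (fun p : Fin n × Fin n => p.1 < p.2),
        c p.1 p.2 • (e p.1 * e p.2)
    (σs + β) ^ (n - 1) * γ = 0 := by
  intro V e f σs β γ
  have hS : σs + β ∈ st13.T n 1 := by
    apply Submodule.add_mem
    · apply Submodule.sum_mem
      intro i _
      exact Submodule.subset_span ⟨[Sum.inl i, Sum.inr i], by simp, by simp [e, f]⟩
    · apply Submodule.sum_mem
      intro p _
      exact Submodule.smul_mem _ _
        (Submodule.subset_span ⟨[Sum.inl p.1, Sum.inl p.2], by simp, by simp [e]⟩)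
  have hγ : γ ∈ st13.T n 2 := by
    apply Submodule.sum_mem
    intro p _
    exact Submodule.smul_mem _ _
      (Submodule.subset_span ⟨[Sum.inl p.1, Sum.inl p.2], by simp, by simp [e]⟩)
  have hfin := st13.mul_mem_T (st13.pow_mem_T hS (n - 1)) hγ
  rw [show n - 1 + 2 = n + 1 from by omega] at hfin
  exact st13.T_eq_bot hfin
end
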